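/- Let f(u,v) be a smooth germ at 0 with quadratic part (s/2)(μ²u² - 2λμuv + λ²v²), s ≠ 0, λ ≠ 0. Suppose the cubic part c₃ satisfies c₃(λ,μ) = 0. After the substitution v ↦ v + (μ/λ)u - c u² with c = (∂c₃/∂v)(λ,μ)/(sλ⁴), the coefficient of u²v in the transformed function vanishes, the coefficient of v² is sλ²/2, and the coefficient of u⁴ equals (1/λ⁴)·( c₄(λ,μ) - (1/(2sλ²))·((∂c₃/∂v)(λ,μ))² ), where c₄ is the quartic part of f. -/

import Mathlib

noncomputable section

/-- Partial derivative in the first variable. -/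
def pdu (f : ℝ × ℝ → ℝ) (p : ℝ × ℝ) : ℝ := fderiv ℝ f p (1, 0)

/-- Partial derivative in the second variable. -/
def pdv (f : ℝ × ℝ → ℝ) (p : ℝ × ℝ) : ℝ := fderiv ℝ f p (0, 1)

/-- The binary cubic with coefficients `c30, c21, c12, c03`. -/
def cubic (c30 c21 c12 c03 : ℝ) (u v : ℝ) : ℝ :=
  c30/6 * u^3 + c21/2 * u^2 * v + c12/2 * u * v^2 + c03/6 * v^3

/-- The binary quartic with coefficients `c40, c31, c22, c13, c04`. -/
def quartic (c40 c31 c22 c13 c04 : ℝ) (u v : ℝ) : ℝ :=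
  c40/24 * u^4 + c31/6 * u^3 * v + c22/4 * u^2 * v^2 + c13/6 * u * v^3 + c04/24 * v^4

/-! The substitution is the shear `φ(u, v) = (u, v + a u - c u²)`, which fixes `u`; hence
`∂ᵤ(F ∘ φ) = (L F) ∘ φ` and `∂ᵥ(F ∘ φ) = (∂ᵥ F) ∘ φ` with `L = ∂ᵤ + (a - 2cu) ∂ᵥ`. The three
coefficients are therefore values at `0` of `∂ᵥ² f`, `∂ᵥ L² f` and `L⁴ f`, which expand by the
product rule and the symmetry of mixed partials. With `a = μ/λ`, the cubic part enters only through
`∂ᵥ(∂ᵤ + a ∂ᵥ)² f (0) = 2 (∂c₃/∂v)(λ,μ) / λ²`; the choice of `c` makes it cancel against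
`-2c ∂ᵥ² f (0)` in `∂ᵥ L² f (0)`, while in
`L⁴ f (0) = (∂ᵤ + a ∂ᵥ)⁴ f (0) - 12c ∂ᵥ(∂ᵤ + a ∂ᵥ)² f (0) + 12c² ∂ᵥ² f (0)`
the last two terms add up to the correction `-(12 / (sλ⁶)) ((∂c₃/∂v)(λ,μ))²`. -/

open scoped ContDiff

section PartialDerivatives

variable {F G : ℝ × ℝ → ℝ}

@[fun_prop]
lemma ContDiff.pdu (hF : ContDiff ℝ ∞ F) : ContDiff ℝ ∞ (pdu F) :=
  (hF.fderiv_right le_rfl).clm_apply contDiff_const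

@[fun_prop]
lemma ContDiff.pdv (hF : ContDiff ℝ ∞ F) : ContDiff ℝ ∞ (pdv F) :=
  (hF.fderiv_right le_rfl).clm_apply contDiff_const

lemma pdu_const (k : ℝ) : pdu (fun _ => k) = fun _ => 0 := by
  ext p; simp [pdu]

lemma pdv_const (k : ℝ) : pdv (fun _ => k) = fun _ => 0 := by
  ext p; simp [pdv]

lemma pdu_add (hF : Differentiable ℝ F) (hG : Differentiable ℝ G) :
    pdu (fun q => F q + G q) = fun q => pdu F q + pdu G q := by
  ext p; simp [pdu, fderiv_fun_add (hF p) (hG p)]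

lemma pdv_add (hF : Differentiable ℝ F) (hG : Differentiable ℝ G) :
    pdv (fun q => F q + G q) = fun q => pdv F q + pdv G q := by
  ext p; simp [pdv, fderiv_fun_add (hF p) (hG p)]

lemma pdu_mul (hF : Differentiable ℝ F) (hG : Differentiable ℝ G) :
    pdu (fun q => F q * G q) = fun q => pdu F q * G q + F q * pdu G q := by
  ext p; simp [pdu, fderiv_fun_mul (hF p) (hG p)]; ring

lemma pdv_mul (hF : Differentiable ℝ F) (hG : Differentiable ℝ G) :
    pdv (fun q => F q * G q) = fun q => pdv F q * G q + F q * pdv G q := by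
  ext p; simp [pdv, fderiv_fun_mul (hF p) (hG p)]; ring

lemma pdu_pdv_comm (hF : ContDiff ℝ ∞ F) : pdu (pdv F) = pdv (pdu F) := by
  ext p
  have hF' : DifferentiableAt ℝ (fderiv ℝ F) p :=
    (hF.fderiv_right (m := ∞) le_rfl).differentiable (by simp) p
  have hsymm := hF.contDiffAt.isSymmSndFDerivAt (x := p)
    (by simp only [minSmoothness_of_isRCLikeNormedField]; exact WithTop.coe_le_coe.2 le_top)
  unfold pdu pdv
  simpa [fderiv_clm_apply hF' (differentiableAt_const _)] using hsymm (1, 0) (0, 1)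

end PartialDerivatives

section Shear

variable (a c : ℝ) {F : ℝ × ℝ → ℝ}

def shear (p : ℝ × ℝ) : ℝ × ℝ := (p.1, p.2 + a * p.1 - c * p.1 ^ 2)

def shearSlope (q : ℝ × ℝ) : ℝ := a - 2 * c * q.1

/-- `L = ∂ᵤ + (a - 2cu) ∂ᵥ`, the pushforward of `∂ᵤ` under `shear a c`. -/
def shearedPdu (F : ℝ × ℝ → ℝ) (q : ℝ × ℝ) : ℝ := pdu F q + shearSlope a c q * pdv F q

lemma shear_zero : shear a c 0 = 0 := by
  simp [shear]

lemma shearSlope_zero : shearSlope a c 0 = a := by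
  simp [shearSlope]

@[fun_prop]
lemma contDiff_shearSlope : ContDiff ℝ ∞ (shearSlope a c) := by
  unfold shearSlope; fun_prop

@[fun_prop]
lemma ContDiff.shearedPdu (hF : ContDiff ℝ ∞ F) : ContDiff ℝ ∞ (shearedPdu a c F) := by
  unfold _root_.shearedPdu; fun_prop

lemma pdu_shearSlope : pdu (shearSlope a c) = fun _ => -(2 * c) := by
  ext p
  unfold shearSlope
  simp (disch := fun_prop) [pdu, fderiv_fun_sub, fderiv_const_mul, fderiv_fst]

lemma pdv_shearSlope : pdv (shearSlope a c) = fun _ => 0 := by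
  ext p
  unfold shearSlope
  simp (disch := fun_prop) [pdv, fderiv_fun_sub, fderiv_const_mul, fderiv_fst]

lemma fderiv_shear_apply_fst (p : ℝ × ℝ) :
    fderiv ℝ (shear a c) p (1, 0) = (1, shearSlope a c p) := by
  unfold shear shearSlope
  rw [DifferentiableAt.fderiv_prodMk (by fun_prop) (by fun_prop)]
  simp (disch := fun_prop) [fderiv_fun_add, fderiv_fun_sub, fderiv_const_mul, fderiv_fun_pow,
    fderiv_fst, fderiv_snd]
  ring

lemma fderiv_shear_apply_snd (p : ℝ × ℝ) : fderiv ℝ (shear a c) p (0, 1) = (0, 1) := by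
  unfold shear
  rw [DifferentiableAt.fderiv_prodMk (by fun_prop) (by fun_prop)]
  simp (disch := fun_prop) [fderiv_fun_add, fderiv_fun_sub, fderiv_const_mul, fderiv_fun_pow,
    fderiv_fst, fderiv_snd]

lemma pdu_comp_shear (hF : Differentiable ℝ F) :
    pdu (fun p => F (shear a c p)) = fun p => shearedPdu a c F (shear a c p) := by
  ext p
  have hφ : DifferentiableAt ℝ (shear a c) p := by unfold shear; fun_prop
  have hsplit : ((1 : ℝ), shearSlope a c p) = (1, 0) + shearSlope a c p • (0, 1) := by simp
  rw [pdu, fderiv_fun_comp p (hF _) hφ, ContinuousLinearMap.comp_apply, fderiv_shear_apply_fst,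
    hsplit, map_add, map_smul]
  rfl

lemma pdv_comp_shear (hF : Differentiable ℝ F) :
    pdv (fun p => F (shear a c p)) = fun p => pdv F (shear a c p) := by
  ext p
  have hφ : DifferentiableAt ℝ (shear a c) p := by unfold shear; fun_prop
  rw [pdv, fderiv_fun_comp p (hF _) hφ, ContinuousLinearMap.comp_apply, fderiv_shear_apply_snd]
  rfl

lemma pdv_shearedPdu_shearedPdu_zero (hF : ContDiff ℝ ∞ F) :
    pdv (shearedPdu a c (shearedPdu a c F)) 0 =
      pdv (pdu (pdu F)) 0 + 2 * a * pdv (pdv (pdu F)) 0 + a ^ 2 * pdv (pdv (pdv F)) 0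
        - 2 * c * pdv (pdv F) 0 := by
  unfold shearedPdu
  simp (disch := fun_prop (disch := simp)) only [pdu_add, pdu_mul, pdv_add, pdv_mul,
    pdu_shearSlope, pdv_shearSlope, pdu_pdv_comm, pdv_const]
  simp only [shearSlope_zero]
  ring

lemma shearedPdu_four_zero (hF : ContDiff ℝ ∞ F) :
    shearedPdu a c (shearedPdu a c (shearedPdu a c (shearedPdu a c F))) 0 =
      pdu (pdu (pdu (pdu F))) 0 + 4 * a * pdv (pdu (pdu (pdu F))) 0
        + 6 * a ^ 2 * pdv (pdv (pdu (pdu F))) 0 + 4 * a ^ 3 * pdv (pdv (pdv (pdu F))) 0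
        + a ^ 4 * pdv (pdv (pdv (pdv F))) 0
        - 12 * c * (pdv (pdu (pdu F)) 0 + 2 * a * pdv (pdv (pdu F)) 0
          + a ^ 2 * pdv (pdv (pdv F)) 0)
        + 12 * c ^ 2 * pdv (pdv F) 0 := by
  unfold shearedPdu
  simp (disch := fun_prop (disch := simp)) only [pdu_add, pdu_mul, pdv_add, pdv_mul,
    pdu_shearSlope, pdv_shearSlope, pdu_pdv_comm, pdu_const, pdv_const]
  simp only [shearSlope_zero]
  ring

end Shear

lemma deriv_cubic (c30 c21 c12 c03 u v : ℝ) :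
    deriv (fun y => cubic c30 c21 c12 c03 u y) v =
      c21 / 2 * u ^ 2 + c12 * u * v + c03 / 2 * v ^ 2 := by
  unfold cubic
  simp (disch := fun_prop) [deriv_fun_add]
  ring

theorem stmt4 (f : ℝ × ℝ → ℝ) (hf : ContDiff ℝ (⊤ : ℕ∞) f)
    (s l m : ℝ) (hs : s ≠ 0) (hl : l ≠ 0)
    (c30 c21 c12 c03 c40 c31 c22 c13 c04 : ℝ)
    (h02 : pdv (pdv f) 0 = s * l ^ 2)
    (h21 : pdv (pdu (pdu f)) 0 = c21)
    (h12 : pdv (pdv (pdu f)) 0 = c12)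
    (h03 : pdv (pdv (pdv f)) 0 = c03)
    (h40 : pdu (pdu (pdu (pdu f))) 0 = c40)
    (h31 : pdv (pdu (pdu (pdu f))) 0 = c31)
    (h22 : pdv (pdv (pdu (pdu f))) 0 = c22)
    (h13 : pdv (pdv (pdv (pdu f))) 0 = c13)
    (h04 : pdv (pdv (pdv (pdv f))) 0 = c04)
    (c3v : ℝ) (hc3v : c3v = deriv (fun y => cubic c30 c21 c12 c03 l y) m)
    (c : ℝ) (hc : c = c3v / (s * l ^ 4)) :
    pdv (pdu (pdu (fun p : ℝ × ℝ => f (p.1, p.2 + (m / l) * p.1 - c * p.1 ^ 2)))) 0 = 0 ∧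
    pdv (pdv (fun p : ℝ × ℝ => f (p.1, p.2 + (m / l) * p.1 - c * p.1 ^ 2))) 0 = s * l ^ 2 ∧
    pdu (pdu (pdu (pdu (fun p : ℝ × ℝ =>
        f (p.1, p.2 + (m / l) * p.1 - c * p.1 ^ 2))))) 0 =
      24 * ((1 / l ^ 4) *
        (quartic c40 c31 c22 c13 c04 l m - 1 / (2 * s * l ^ 2) * c3v ^ 2)) := by
  have hg : (fun p : ℝ × ℝ => f (p.1, p.2 + (m / l) * p.1 - c * p.1 ^ 2)) =
      fun p => f (shear (m / l) c p) := rfl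
  rw [hg]
  simp (disch := fun_prop (disch := simp)) only [pdu_comp_shear, pdv_comp_shear, shear_zero,
    pdv_shearedPdu_shearedPdu_zero _ _ hf, shearedPdu_four_zero _ _ hf,
    h40, h31, h22, h13, h04, h21, h12, h03, h02]
  rw [deriv_cubic] at hc3v
  subst hc hc3v
  refine ⟨by field_simp; ring, trivial, by rw [quartic]; field_simp; ring⟩
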